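/- Suppose m, w, t are nonnegative reals with m ≥ w ≥ t ≥ 0 and r ≥ 16, and suppose 2^m ≤ 2^t (m r / w)^w. Then m ≤ t + w·log₂(2r·log₂ r). -/
import Mathlib

lemma key_ineq (x : ℝ) (hx : 7 < x) : x + 1 < (2:ℝ) ^ ((x-1)/2) := by
  have hs : 0 < (x - 7)/2 := by linarith
  have h1 : (1 : ℝ) + Real.log 2 * ((x-7)/2) ≤ (2:ℝ) ^ ((x-7)/2) := by
    rw [Real.rpow_def_of_pos (by norm_num)]
    have := Real.add_one_le_exp (Real.log 2 * ((x-7)/2))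
    linarith
  have h2 : (2:ℝ) ^ ((x-1)/2) = 8 * (2:ℝ) ^ ((x-7)/2) := by
    rw [show (x-1)/2 = 3 + (x-7)/2 by ring, Real.rpow_add (by norm_num),
      show (3:ℝ) = ((3:ℕ):ℝ) by norm_num, Real.rpow_natCast]
    norm_num
  have hl : (0.6931471803 : ℝ) < Real.log 2 := Real.log_two_gt_d9
  nlinarith [mul_lt_mul_of_pos_right hl hs]

lemma main_ineq (x r : ℝ) (hx : 0 ≤ x) (hr : 16 ≤ r)
    (h : (2:ℝ)^x ≤ (x+1)*r) : (2:ℝ)^x ≤ 2*r*Real.logb 2 r := by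
  have hr0 : (0:ℝ) < r := by linarith
  have hL : (4:ℝ) ≤ Real.logb 2 r := by
    have h16 : (16:ℝ) = (2:ℝ)^(4:ℝ) := by
      rw [show (4:ℝ) = ((4:ℕ):ℝ) by norm_num, Real.rpow_natCast]; norm_num
    calc (4:ℝ) = Real.logb 2 ((2:ℝ)^(4:ℝ)) := (Real.logb_rpow (by norm_num) (by norm_num)).symm
      _ ≤ Real.logb 2 r := by
          apply Real.logb_le_logb_of_le (by norm_num) (by positivity)
          rw [← h16]; exact hr
  by_cases hc : x + 1 ≤ 2 * Real.logb 2 r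
  · calc (2:ℝ)^x ≤ (x+1)*r := h
      _ ≤ 2*Real.logb 2 r * r := mul_le_mul_of_nonneg_right hc (by linarith)
      _ = 2*r*Real.logb 2 r := by ring
  · exfalso
    push_neg at hc
    have hx7 : 7 < x := by linarith
    have hr2 : r < (2:ℝ)^((x+1)/2) := by
      have hre : r = (2:ℝ)^(Real.logb 2 r) :=
        (Real.rpow_logb (by norm_num) (by norm_num) hr0).symm
      calc r = (2:ℝ)^(Real.logb 2 r) := hre
        _ < (2:ℝ)^((x+1)/2) := by
            apply Real.rpow_lt_rpow_left_iff (by norm_num : (1:ℝ) < 2) |>.mpr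
            linarith
    have hkey := key_ineq x hx7
    have h2 : (2:ℝ)^x = (2:ℝ)^((x-1)/2) * (2:ℝ)^((x+1)/2) := by
      rw [← Real.rpow_add (by norm_num)]; ring_nf
    have hA : (0:ℝ) < (2:ℝ)^((x+1)/2) := Real.rpow_pos_of_pos (by norm_num) _
    nlinarith [mul_lt_mul_of_pos_right hkey hA,
      mul_lt_mul_of_pos_left hr2 (show (0:ℝ) < x+1 by linarith)]

theorem stmt_6 (m w t r : ℝ) (hmw : w ≤ m) (hwt : t ≤ w) (ht : 0 ≤ t) (hr : 16 ≤ r)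
    (h : (2 : ℝ) ^ m ≤ (2 : ℝ) ^ t * (m * r / w) ^ w) :
    m ≤ t + w * Real.logb 2 (2 * r * Real.logb 2 r) := by
  rcases eq_or_lt_of_le (ht.trans hwt) with hw0 | hw
  · -- w = 0
    have htw : t = 0 := le_antisymm (hw0 ▸ hwt) ht
    have hm0 : m ≤ 0 := by
      have : (2:ℝ)^m ≤ (2:ℝ)^(0:ℝ) := by
        rw [Real.rpow_zero]
        calc (2:ℝ)^m ≤ (2:ℝ)^t * (m*r/w)^w := h
          _ = 1 := by rw [← hw0, htw, Real.rpow_zero, Real.rpow_zero]; ring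
      exact (Real.rpow_le_rpow_left_iff (by norm_num : (1:ℝ) < 2)).mp this
    have hm : m = 0 := le_antisymm hm0 (hw0 ▸ hmw)
    rw [hm, htw, ← hw0]
    norm_num
  · have hm : 0 < m := lt_of_lt_of_le hw hmw
    have hr0 : (0:ℝ) < r := by linarith
    have hX : 0 < m * r / w := by positivity
    have hlog : m ≤ t + w * Real.logb 2 (m * r / w) := by
      calc m = Real.logb 2 ((2:ℝ)^m) := (Real.logb_rpow (by norm_num) (by norm_num)).symm
        _ ≤ Real.logb 2 ((2:ℝ)^t * (m*r/w)^w) := by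
            exact Real.logb_le_logb_of_le (by norm_num) (by positivity) h
        _ = t + w * Real.logb 2 (m*r/w) := by
            rw [Real.logb_mul (by positivity) (by positivity),
              Real.logb_rpow (by norm_num) (by norm_num)]
            congr 1
            rw [Real.logb, Real.logb, Real.log_rpow hX]
            ring
    set x : ℝ := (m - t)/w with hxdef
    have hx0 : 0 ≤ x := by
      apply div_nonneg _ hw.le; linarith
    have hmw' : m * r / w ≤ (x + 1) * r := by
      apply div_le_iff₀ hw |>.mpr
      have hxw : x * w = m - t := by rw [hxdef]; field_simp
      nlinarith
    have hx1 : x ≤ Real.logb 2 ((x+1)*r) := by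
      have h1 : w * x = m - t := by rw [hxdef]; field_simp
      have h2 : Real.logb 2 (m*r/w) ≤ Real.logb 2 ((x+1)*r) :=
        Real.logb_le_logb_of_le (by norm_num) (by positivity) hmw'
      have := hlog
      nlinarith
    have h2x : (2:ℝ)^x ≤ (x+1)*r := by
      have hpos : (0:ℝ) < (x+1)*r := by positivity
      exact (Real.le_logb_iff_rpow_le (by norm_num : (1:ℝ) < 2) hpos).mp hx1
    have hmain := main_ineq x r hx0 hr h2x
    have hL : (4:ℝ) ≤ Real.logb 2 r := by
      have h16 : (16:ℝ) = (2:ℝ)^(4:ℝ) := by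
        rw [show (4:ℝ) = ((4:ℕ):ℝ) by norm_num, Real.rpow_natCast]; norm_num
      calc (4:ℝ) = Real.logb 2 ((2:ℝ)^(4:ℝ)) := (Real.logb_rpow (by norm_num) (by norm_num)).symm
        _ ≤ Real.logb 2 r := by
            apply Real.logb_le_logb_of_le (by norm_num) (by positivity)
            rw [← h16]; exact hr
    have hfinal : x ≤ Real.logb 2 (2*r*Real.logb 2 r) := by
      have hpos : (0:ℝ) < 2*r*Real.logb 2 r := by nlinarith
      exact (Real.le_logb_iff_rpow_le (by norm_num : (1:ℝ) < 2) hpos).mpr hmain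
    have : w * x = m - t := by rw [hxdef]; field_simp
    nlinarith
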